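/- arXiv:math/0310346 — 2 statements merged into one kernel-verified Lean document; each statement's English description precedes it below -/
import Mathlib

section
/- Let φ and ψ be real-valued Schwartz functions on ℝ². Then ∫_{[0,1]²} Σ_{m∈ℤ²} ⟨f, Tran_{y+m}φ⟩ Tran_{y+m}ψ dy = f * Φ, where Φ(x) = ∬ conj(φ(u)) ψ(x+u) du, and in particular the Fourier transform of Φ equals conj(φ̂)·ψ̂. -/
/-!
Periodising the integrand over `ℤ²` and integrating over the unit cube, a fundamental domain of
`ℤ²`, unfolds the left-hand side into an integral over all of `ℝ²`. The coefficient
`⟨f, Tran_t φ⟩` is the convolution `f ⋆ φ̃` with `φ̃ = conjneg φ`, so that integral is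
`((f ⋆ φ̃) ⋆ ψ)(x)`, and associativity of convolution turns it into `(f ⋆ Φ)(x)` with
`Φ = φ̃ ⋆ ψ`. The Fourier transform of `Φ` is then given by the convolution theorem together with
`𝓕 φ̃ = conj (𝓕 φ)`.
-/

open MeasureTheory ContinuousLinearMap Function
open scoped Convolution FourierTransform ComplexConjugate

namespace MeasureTheory

theorem IsAddFundamentalDomain.setIntegral_tsum_vadd {G α E : Type*} [AddGroup G] [Countable G]
    [MeasurableSpace G] [MeasurableSpace α] [AddAction G α] [MeasurableVAdd G α] {μ : Measure α}
    [VAddInvariantMeasure G α μ] [NormedAddCommGroup E] [NormedSpace ℝ E] {s : Set α}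
    (h : IsAddFundamentalDomain G s μ) {f : α → E} (hf : Integrable f μ) :
    ∫ x in s, ∑' g : G, f (g +ᵥ x) ∂μ = ∫ x, f x ∂μ := by
  rw [h.integral_eq_tsum'' f hf, integral_tsum]
  · exact fun g ↦ (hf.1.comp_quasiMeasurePreserving
      (measurePreserving_vadd g μ).quasiMeasurePreserving).restrict
  · rw [← h.lintegral_eq_tsum'' (‖f ·‖ₑ)]
    exact hf.2.ne

variable {G 𝕜 : Type*} [RCLike 𝕜] [AddCommGroup G] [MeasurableSpace G] {μ : Measure G}
  {f g k : G → 𝕜} {C : ℝ}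

theorem Integrable.conjneg [MeasurableNeg G] [μ.IsNegInvariant] (hf : Integrable f μ) :
    Integrable (conjneg f) μ :=
  (RCLike.conjCLE : 𝕜 ≃L[ℝ] 𝕜).toContinuousLinearMap.integrable_comp hf.comp_neg

theorem AEStronglyMeasurable.conjneg [MeasurableNeg G] [μ.IsNegInvariant]
    (hf : AEStronglyMeasurable f μ) : AEStronglyMeasurable (conjneg f) μ :=
  (hf.comp_measurePreserving (Measure.measurePreserving_neg μ)).star

theorem convolution_conjneg_apply (f g : G → 𝕜) (t : G) :
    (f ⋆[mul 𝕜 𝕜, μ] conjneg g) t = ∫ s, f s * conj (g (s - t)) ∂μ := by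
  simp [convolution_def, neg_sub]

theorem conjneg_convolution_apply [MeasurableNeg G] [μ.IsNegInvariant] (g k : G → 𝕜) (x : G) :
    (conjneg g ⋆[mul 𝕜 𝕜, μ] k) x = ∫ u, conj (g u) * k (x + u) ∂μ := by
  rw [convolution_def, ← integral_neg_eq_self]
  simp [sub_neg_eq_add]

theorem Integrable.convolutionExistsAt_of_bound_right [MeasurableAdd₂ G] [MeasurableNeg G]
    [SFinite μ] [μ.IsAddRightInvariant] (hf : Integrable f μ) (hg : AEStronglyMeasurable g μ)
    (hC : ∀ x, ‖g x‖ ≤ C) (x : G) :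
    ConvolutionExistsAt f g x (mul 𝕜 𝕜) μ :=
  hf.mul_bdd (hg.comp_quasiMeasurePreserving
    (quasiMeasurePreserving_sub_left_of_right_invariant μ x)) (.of_forall fun t ↦ hC (x - t))

theorem Integrable.convolutionExistsAt_of_bound_left [MeasurableAdd₂ G] [MeasurableNeg G]
    [μ.IsAddLeftInvariant] [μ.IsNegInvariant] (hk : Integrable k μ)
    (hg : AEStronglyMeasurable g μ) (hC : ∀ x, ‖g x‖ ≤ C) (x : G) :
    ConvolutionExistsAt g k x (mul 𝕜 𝕜) μ :=
  (hk.comp_sub_left x).bdd_mul hg (.of_forall hC)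

section Assoc

variable [MeasurableAdd₂ G] [MeasurableNeg G] [SFinite μ] [μ.IsAddLeftInvariant]
  [μ.IsAddRightInvariant] [μ.IsNegInvariant]

theorem integrable_prod_convolution_convolution_integrand (hf : Integrable f μ)
    (hg : AEStronglyMeasurable g μ) (hC : ∀ x, ‖g x‖ ≤ C) (hk : Integrable k μ) (x₀ : G) :
    Integrable (uncurry fun t s ↦ f s * (g (t - s) * k (x₀ - t))) (μ.prod μ) := by
  have hbound : Integrable (fun p : G × G ↦ C * ‖k (x₀ - p.1)‖ * ‖f p.2‖) (μ.prod μ) :=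
    ((hk.comp_sub_left x₀).norm.const_mul C).mul_prod hf.norm
  refine hbound.mono' ?_ (.of_forall fun ⟨t, s⟩ ↦ ?_)
  · have := (hf.1.convolution_integrand (mul 𝕜 𝕜) hg).mul ((hk.1.comp_quasiMeasurePreserving
      (quasiMeasurePreserving_sub_left_of_right_invariant μ x₀)).comp_fst (ν := μ))
    exact this.congr (.of_forall fun _ ↦ mul_assoc _ _ _)
  · simp only [uncurry_apply_pair, norm_mul]
    calc ‖f s‖ * (‖g (t - s)‖ * ‖k (x₀ - t)‖) ≤ ‖f s‖ * (C * ‖k (x₀ - t)‖) := by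
          gcongr; exact hC (t - s)
      _ = C * ‖k (x₀ - t)‖ * ‖f s‖ := by ring

theorem convolutionExistsAt_convolution_of_bound (hf : Integrable f μ)
    (hg : AEStronglyMeasurable g μ) (hC : ∀ x, ‖g x‖ ≤ C) (hk : Integrable k μ) (x₀ : G) :
    ConvolutionExistsAt (f ⋆[mul 𝕜 𝕜, μ] g) k x₀ (mul 𝕜 𝕜) μ := by
  refine (integrable_prod_convolution_convolution_integrand hf hg hC hk x₀).integral_prod_left
    |>.congr (.of_forall fun t ↦ ?_)
  simp only [uncurry_apply_pair, convolution_def, mul_apply', ← mul_assoc, integral_mul_const]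

theorem convolution_assoc_of_bound (hf : Integrable f μ) (hg : AEStronglyMeasurable g μ)
    (hC : ∀ x, ‖g x‖ ≤ C) (hk : Integrable k μ) (x₀ : G) :
    ((f ⋆[mul 𝕜 𝕜, μ] g) ⋆[mul 𝕜 𝕜, μ] k) x₀ = (f ⋆[mul 𝕜 𝕜, μ] (g ⋆[mul 𝕜 𝕜, μ] k)) x₀ :=
  convolution_assoc' _ _ _ _ (fun _ _ _ ↦ mul_assoc _ _ _)
    (.of_forall (hf.convolutionExistsAt_of_bound_right hg hC))
    (.of_forall (hk.convolutionExistsAt_of_bound_left hg hC))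
    (integrable_prod_convolution_convolution_integrand hf hg hC hk x₀)

end Assoc

end MeasureTheory

namespace EuclideanSpace

variable {ι : Type*} [Fintype ι]

theorem coe_restrictScalars_equivFun_symm_basisFun (m : ι → ℤ) :
    ((((basisFun ι ℝ).toBasis.restrictScalars ℤ).equivFun.symm m : _) : EuclideanSpace ℝ ι)
      = WithLp.toLp 2 (fun i ↦ (m i : ℝ)) := by
  classical
  rw [Module.Basis.equivFun_symm_apply, Submodule.coe_sum]
  simp only [Submodule.coe_smul, Module.Basis.restrictScalars_apply]
  ext j
  simp [basisFun_apply, Pi.single_apply]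

theorem setIntegral_unitCube_tsum_add_intCast {E : Type*} [NormedAddCommGroup E]
    [NormedSpace ℝ E] {F : EuclideanSpace ℝ ι → E} (hF : Integrable F) :
    ∫ y in {y : EuclideanSpace ℝ ι | ∀ i, y i ∈ Set.Icc (0 : ℝ) 1},
      ∑' m : ι → ℤ, F (y + WithLp.toLp 2 (fun i ↦ (m i : ℝ))) = ∫ y, F y := by
  let b := (basisFun ι ℝ).toBasis
  have hcube : {y : EuclideanSpace ℝ ι | ∀ i, y i ∈ Set.Icc (0 : ℝ) 1} = parallelepiped b := by
    rw [parallelepiped_basis_eq]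
    simp [b]
  have : Countable (Submodule.span ℤ (Set.range b)).toAddSubgroup :=
    inferInstanceAs (Countable (Submodule.span ℤ (Set.range b)))
  rw [hcube, ← setIntegral_congr_set (ZSpan.fundamentalDomain_ae_parallelepiped b volume),
    ← (ZSpan.isAddFundamentalDomain' b volume).setIntegral_tsum_vadd hF]
  congr 1 with y
  let e : (ι → ℤ) ≃ (Submodule.span ℤ (Set.range b)).toAddSubgroup :=
    (b.restrictScalars ℤ).equivFun.symm.toEquiv
  rw [← e.tsum_eq]
  congr 1 with m
  rw [AddSubgroup.vadd_def, vadd_eq_add, add_comm]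
  exact congrArg (fun v ↦ F (v + y)) (coe_restrictScalars_equivFun_symm_basisFun m).symm

theorem setIntegral_unitCube_tsum_translates {𝕜 : Type*} [RCLike 𝕜]
    {f φ ψ : EuclideanSpace ℝ ι → 𝕜} {C : ℝ} (hf : Integrable f) (hφ : AEStronglyMeasurable φ)
    (hφC : ∀ x, ‖φ x‖ ≤ C) (hψ : Integrable ψ) (x : EuclideanSpace ℝ ι) :
    ∫ y in {y : EuclideanSpace ℝ ι | ∀ i, y i ∈ Set.Icc (0 : ℝ) 1}, ∑' m : ι → ℤ,
        (∫ z, f z * conj (φ (z - (y + WithLp.toLp 2 fun i ↦ (m i : ℝ))))) *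
          ψ (x - (y + WithLp.toLp 2 fun i ↦ (m i : ℝ)))
      = ∫ z, f z * ∫ u, conj (φ u) * ψ (x - z + u) := by
  have hφC' (v : EuclideanSpace ℝ ι) : ‖conjneg φ v‖ ≤ C := by simpa using hφC (-v)
  calc _ = ∫ y in {y : EuclideanSpace ℝ ι | ∀ i, y i ∈ Set.Icc (0 : ℝ) 1}, ∑' m : ι → ℤ,
          (f ⋆[mul 𝕜 𝕜] conjneg φ) (y + WithLp.toLp 2 fun i ↦ (m i : ℝ)) *
            ψ (x - (y + WithLp.toLp 2 fun i ↦ (m i : ℝ))) := by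
        simp only [convolution_conjneg_apply]
    _ = ((f ⋆[mul 𝕜 𝕜] conjneg φ) ⋆[mul 𝕜 𝕜] ψ) x :=
        setIntegral_unitCube_tsum_add_intCast
          (convolutionExistsAt_convolution_of_bound hf hφ.conjneg hφC' hψ x)
    _ = (f ⋆[mul 𝕜 𝕜] (conjneg φ ⋆[mul 𝕜 𝕜] ψ)) x :=
        convolution_assoc_of_bound hf hφ.conjneg hφC' hψ x
    _ = _ := by
        rw [convolution_def]
        simp only [mul_apply', conjneg_convolution_apply]

end EuclideanSpace

namespace Real

variable {V : Type*} [NormedAddCommGroup V] [InnerProductSpace ℝ V] [FiniteDimensional ℝ V]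
  [MeasurableSpace V] [BorelSpace V]

theorem fourier_conjneg (f : V → ℂ) (ξ : V) : 𝓕 (conjneg f) ξ = conj (𝓕 f ξ) := by
  rw [fourier_eq, fourier_eq, ← integral_conj, ← integral_neg_eq_self]
  congr 1 with x
  simp [Circle.smul_def]

theorem fourier_integral_conj_mul_comp_add {φ ψ : V → ℂ} (hφ : Integrable φ)
    (hψ : Integrable ψ) (ξ : V) :
    𝓕 (fun x ↦ ∫ u, conj (φ u) * ψ (x + u)) ξ = conj (𝓕 φ ξ) * 𝓕 ψ ξ := by
  have hΦ : (fun x ↦ ∫ u, conj (φ u) * ψ (x + u)) = conjneg φ ⋆[mul ℂ ℂ] ψ :=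
    funext fun x ↦ (conjneg_convolution_apply φ ψ x).symm
  rw [hΦ, fourier_mul_convolution_eq hφ.conjneg hψ, fourier_conjneg]

end Real

/-- The averaged wave-packet reproducing identity: for real-valued Schwartz `φ, ψ` on `ℝ²`
and Schwartz `f`,
`∫_{[0,1]²} ∑_{m ∈ ℤ²} ⟨f, Tran_{y+m} φ⟩ Tran_{y+m} ψ dy = f * Φ` pointwise, where
`Φ(x) = ∬ conj(φ(u)) ψ(x+u) du`; in particular `Φ̂ = conj(φ̂) ψ̂`. -/
theorem averaged_translates_eq_convolution
    (φ ψ : SchwartzMap (EuclideanSpace ℝ (Fin 2)) ℝ)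
    (f : SchwartzMap (EuclideanSpace ℝ (Fin 2)) ℂ) :
    (∀ x : EuclideanSpace ℝ (Fin 2),
      (∫ y in {y : EuclideanSpace ℝ (Fin 2) | ∀ i, y i ∈ Set.Icc (0 : ℝ) 1},
        ∑' m : Fin 2 → ℤ,
          (∫ z, f z * (starRingEnd ℂ) ((φ (z - (y + (show EuclideanSpace ℝ (Fin 2) from WithLp.toLp 2 fun i => (m i : ℝ)))) : ℝ) : ℂ)) *
            ((ψ (x - (y + (show EuclideanSpace ℝ (Fin 2) from WithLp.toLp 2 fun i => (m i : ℝ)))) : ℝ) : ℂ))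
      = ∫ z, f z *
          (∫ u, (starRingEnd ℂ) ((φ u : ℝ) : ℂ) * ((ψ ((x - z) + u) : ℝ) : ℂ))) ∧
    (∀ ξ : EuclideanSpace ℝ (Fin 2),
      𝓕 (fun x => ∫ u, (starRingEnd ℂ) ((φ u : ℝ) : ℂ) * ((ψ (x + u) : ℝ) : ℂ)) ξ
        = (starRingEnd ℂ) (𝓕 (fun v => ((φ v : ℝ) : ℂ)) ξ) *
            𝓕 (fun v => ((ψ v : ℝ) : ℂ)) ξ) := by
  have hφ : Integrable (fun v ↦ ((φ v : ℝ) : ℂ)) := φ.integrable.ofReal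
  have hψ : Integrable (fun v ↦ ((ψ v : ℝ) : ℂ)) := ψ.integrable.ofReal
  refine ⟨EuclideanSpace.setIntegral_unitCube_tsum_translates f.integrable
    hφ.aestronglyMeasurable (fun v ↦ by simpa using φ.norm_le_seminorm ℝ v) hψ,
    Real.fourier_integral_conj_mul_comp_add hφ hψ⟩
end

section
/- Restricted type implies strong type above the critical exponent: suppose T is a sublinear operator such that for all measurable sets E, F of finite measure with |E| ≥ 9|F| one has |⟨T 1_E, 1_F⟩| ≤ C |F| (1 + log(|E|/|F|)), and T maps L² to weak L² with norm C. Then for every p > 2 and every set E, |{|T 1_E| > λ}| ≤ C_p λ^{−p} |E| for all λ > 1. -/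
/-!
Fix `E` and `λ`, and let `G = {T 1_E > λ}`. Every `F ⊆ G` with `9|F| ≤ |E|` satisfies
`λ |F| ≤ ∫_F T 1_E ≤ C |F| (1 + log (|E|/|F|))`. If `9|G| > |E|`, a subset `F ⊆ G` with
`|F| = |E|/18` (it exists because planar Lebesgue measure can be cut continuously by vertical lines)
forces `λ ≤ C (1 + log 18)`. Above that threshold we may therefore take `F = G`, which gives
`|G| ≤ e^{1 - λ/C} |E|`, and exponential decay beats `λ^{-p}`; the same applies to `-T`. Below the
threshold the weak `L²` bound suffices.
-/

open MeasureTheory Set Filter Topology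
open scoped ENNReal Nat

theorem exists_measure_Iio_eq (ν : Measure ℝ) [IsFiniteMeasure ν] [NullSingletonClass ν]
    {c : ℝ≥0∞} (hc0 : 0 < c) (hc : c < ν univ) : ∃ t, ν (Iio t) = c := by
  have h_bot : Tendsto (fun t => ν (Iio t)) atBot (𝓝 0) := by
    have := tendsto_measure_iInter_atBot (μ := ν) (fun _ => measurableSet_Iio.nullMeasurableSet)
      (monotone_Iio (α := ℝ)) ⟨0, measure_ne_top _ _⟩
    rwa [iInter_Iio_of_not_bddBelow_range (by simp), measure_empty] at this
  have h_top : Tendsto (fun t => ν (Iio t)) atTop (𝓝 (ν univ)) := by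
    have := tendsto_measure_iUnion_atTop (μ := ν) (monotone_Iio (α := ℝ))
    rwa [iUnion_Iio] at this
  obtain ⟨t₁, ht₁⟩ := (h_bot.eventually (gt_mem_nhds hc0)).exists
  obtain ⟨t₂, ht₂⟩ := (h_top.eventually (lt_mem_nhds hc)).exists
  set A := {t | ν (Iio t) ≤ c}
  have hA : BddAbove A := ⟨t₂, fun t ht => le_of_not_gt fun h =>
    (ht₂.trans_le (measure_mono (Iio_subset_Iio h.le))).not_ge ht⟩
  obtain ⟨u, hu_mono, hu_lim, huA⟩ := exists_seq_tendsto_sSup ⟨t₁, ht₁.le⟩ hA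
  refine ⟨sSup A, le_antisymm ?_ ?_⟩
  · have h_union : Iio (sSup A) = ⋃ n, Iio (u n) := by
      refine (iUnion_subset fun n => Iio_subset_Iio (le_csSup hA (huA n))).antisymm' ?_
      exact fun x hx => mem_iUnion.2 (hu_lim.eventually (lt_mem_nhds hx)).exists
    rw [h_union, (monotone_Iio.comp hu_mono).measure_iUnion (s := fun n => Iio (u n))]
    exact iSup_le huA
  · have h_inter : (⋂ r > sSup A, Iio r) = Iic (sSup A) := by
      ext x; simpa using forall_gt_iff_le
    have := tendsto_measure_biInter_gt (μ := ν) (s := Iio) (a := sSup A)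
      (fun _ _ => measurableSet_Iio.nullMeasurableSet)
      (fun _ _ _ h => Iio_subset_Iio h) ⟨sSup A + 1, by simp, measure_ne_top _ _⟩
    rw [h_inter, ← measure_congr Iio_ae_eq_Iic] at this
    refine ge_of_tendsto this (eventually_nhdsWithin_of_forall fun r hr => ?_)
    exact (not_le.1 fun h => (le_csSup hA h).not_gt hr).le

section Darboux

variable {α : Type*} [MeasurableSpace α]

def HasDarbouxProperty (μ : Measure α) : Prop :=
  ∀ ⦃S : Set α⦄, MeasurableSet S → μ S < ∞ →
    ∀ ⦃c : ℝ≥0∞⦄, 0 < c → c < μ S → ∃ F ⊆ S, MeasurableSet F ∧ μ F = c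

theorem hasDarbouxProperty_of_measure_preimage_singleton {μ : Measure α} {f : α → ℝ}
    (hf : Measurable f) (hf0 : ∀ t, μ (f ⁻¹' {t}) = 0) : HasDarbouxProperty μ := by
  intro S hS hS_fin c hc0 hc
  have : IsFiniteMeasure (μ.restrict S) := isFiniteMeasure_restrict.2 hS_fin.ne
  have : NullSingletonClass ((μ.restrict S).map f) := ⟨fun t => by
    rw [Measure.map_apply hf (measurableSet_singleton t)]
    exact le_zero_iff.1 ((Measure.restrict_apply_le _ _).trans_eq (hf0 t))⟩
  obtain ⟨t, ht⟩ := exists_measure_Iio_eq ((μ.restrict S).map f) hc0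
    (by rwa [Measure.map_apply hf MeasurableSet.univ, preimage_univ, Measure.restrict_apply_univ])
  refine ⟨S ∩ f ⁻¹' Iio t, inter_subset_left, hS.inter (hf measurableSet_Iio), ?_⟩
  rw [← ht, Measure.map_apply hf measurableSet_Iio,
    Measure.restrict_apply (hf measurableSet_Iio), inter_comm]

theorem hasDarbouxProperty_volume_prod : HasDarbouxProperty (volume : Measure (ℝ × ℝ)) :=
  hasDarbouxProperty_of_measure_preimage_singleton measurable_fst fun t => by
    rw [← prod_univ, Measure.volume_eq_prod, Measure.prod_prod]
    simp

end Darboux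

theorem le_exp_mul_of_le_mul_log {C lam s a : ℝ} (hC : 0 < C) (hs : 0 < s) (ha : 0 < a)
    (h : lam ≤ C * (1 + Real.log (a / s))) : s ≤ Real.exp (1 - lam / C) * a := by
  have h_log : lam / C - 1 ≤ Real.log (a / s) := by
    rw [div_sub_one hC.ne', div_le_iff₀ hC]
    linarith
  have h_exp := (Real.le_log_iff_exp_le (div_pos ha hs)).1 h_log
  rw [le_div_iff₀ hs] at h_exp
  rw [show 1 - lam / C = -(lam / C - 1) by ring, Real.exp_neg, inv_mul_eq_div,
    le_div_iff₀ (Real.exp_pos _)]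
  linarith

theorem exp_one_sub_div_le_mul_rpow_neg {C x : ℝ} (hC : 0 < C) (hx : 1 ≤ x) (p : ℝ) :
    Real.exp (1 - x / C) ≤ Real.exp 1 * ⌈p⌉₊ ! * C ^ ⌈p⌉₊ * x ^ (-p) := by
  set m := ⌈p⌉₊
  have hx0 : 0 < x := one_pos.trans_le hx
  have h_taylor := Real.pow_div_factorial_le_exp _ (div_pos hx0 hC).le m
  have h_pow : x ^ p ≤ x ^ m := by
    rw [← Real.rpow_natCast]
    exact Real.rpow_le_rpow_of_exponent_le hx (Nat.le_ceil p)
  calc Real.exp (1 - x / C) = Real.exp 1 * (Real.exp (x / C))⁻¹ := by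
        rw [sub_eq_add_neg, Real.exp_add, Real.exp_neg]
    _ ≤ Real.exp 1 * ((x / C) ^ m / m !)⁻¹ := by gcongr
    _ = Real.exp 1 * m ! * C ^ m * (x ^ m)⁻¹ := by rw [div_pow]; field_simp
    _ ≤ Real.exp 1 * m ! * C ^ m * x ^ (-p) := by
      rw [Real.rpow_neg hx0.le]
      gcongr

theorem div_sq_le_mul_rpow_neg (c : ℝ) {x x₀ p : ℝ} (hx : 1 ≤ x) (hx₀ : x ≤ x₀) (hp : 0 ≤ p) :
    c ^ 2 / x ^ 2 ≤ c ^ 2 * x₀ ^ p * x ^ (-p) := by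
  have hx0 : 0 < x := one_pos.trans_le hx
  calc c ^ 2 / x ^ 2 ≤ c ^ 2 := div_le_self (sq_nonneg c) (one_le_pow₀ hx)
    _ ≤ c ^ 2 * (x₀ ^ p / x ^ p) := by
      refine le_mul_of_one_le_right (sq_nonneg c) ((one_le_div₀ (by positivity)).2 ?_)
      exact Real.rpow_le_rpow hx0.le hx₀ hp
    _ = c ^ 2 * x₀ ^ p * x ^ (-p) := by rw [Real.rpow_neg hx0.le]; ring

section LogDualBound

variable {α : Type*} [MeasurableSpace α] {μ : Measure α} {f : α → ℝ} {a : ℝ≥0∞} {C lam : ℝ}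

def HasLogDualBound (μ : Measure α) (f : α → ℝ) (a : ℝ≥0∞) (C : ℝ) : Prop :=
  ∀ F, MeasurableSet F → μ F < ∞ → 9 * μ F ≤ a →
    |∫ x in F, f x ∂μ| ≤ C * (μ F).toReal * (1 + Real.log (a.toReal / (μ F).toReal))

theorem HasLogDualBound.neg (h : HasLogDualBound μ f a C) : HasLogDualBound μ (-f) a C :=
  fun F hF hF_fin h9 => by
    simpa only [Pi.neg_apply, integral_neg, abs_neg] using h F hF hF_fin h9

theorem HasLogDualBound.le_mul_log (h : HasLogDualBound μ f a C) {F : Set α}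
    (hF : MeasurableSet F) (hF_fin : μ F < ∞) (hF0 : μ F ≠ 0) (h9 : 9 * μ F ≤ a)
    (hint : IntegrableOn f F μ) (hlt : ∀ x ∈ F, lam < f x) :
    lam ≤ C * (1 + Real.log (a.toReal / (μ F).toReal)) := by
  have hF_pos : 0 < (μ F).toReal := ENNReal.toReal_pos hF0 hF_fin.ne
  have h_int := setIntegral_ge_of_const_le_real hF hF_fin.ne (fun x hx => (hlt x hx).le) hint
  refine le_of_mul_le_mul_right ?_ hF_pos
  calc lam * (μ F).toReal ≤ ∫ x in F, f x ∂μ := h_int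
    _ ≤ |∫ x in F, f x ∂μ| := le_abs_self _
    _ ≤ _ := h F hF hF_fin h9
    _ = _ := by ring

theorem HasLogDualBound.nine_mul_le (h : HasLogDualBound μ f a C) (hμ : HasDarbouxProperty μ)
    (ha0 : a ≠ 0) (ha : a ≠ ∞) (hlam : C * (1 + Real.log 18) < lam) {S : Set α}
    (hS : MeasurableSet S) (hS_fin : μ S < ∞) (hint : IntegrableOn f S μ)
    (hlt : ∀ x ∈ S, lam < f x) : 9 * μ S ≤ a := by
  by_contra! h_big
  have h_lt : a / 18 < μ S := by
    rw [ENNReal.div_lt_iff (by norm_num) (by norm_num)]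
    calc a < 9 * μ S := h_big
      _ ≤ μ S * 18 := by rw [mul_comm]; gcongr; norm_num
  obtain ⟨F, hFS, hF, hF_eq⟩ := hμ hS hS_fin (ENNReal.div_pos ha0 (by norm_num)) h_lt
  have h9 : 9 * μ F ≤ a := by
    rw [hF_eq]
    calc 9 * (a / 18) ≤ 18 * (a / 18) := by gcongr; norm_num
      _ = a := ENNReal.mul_div_cancel (by norm_num) (by norm_num)
  have h_ratio : a.toReal / (μ F).toReal = 18 := by
    have : 0 < a.toReal := ENNReal.toReal_pos ha0 ha
    rw [hF_eq, ENNReal.toReal_div]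
    field_simp
    norm_num
  have := h.le_mul_log hF (hF_eq ▸ ENNReal.div_lt_top ha (by norm_num))
    (hF_eq ▸ (ENNReal.div_pos ha0 (by norm_num)).ne') h9 (hint.mono_set hFS)
    (fun x hx => hlt x (hFS hx))
  rw [h_ratio] at this
  linarith

theorem HasLogDualBound.measure_le_exp_mul (h : HasLogDualBound μ f a C)
    (hμ : HasDarbouxProperty μ) (hC : 0 < C) (ha0 : a ≠ 0) (ha : a ≠ ∞)
    (hlam : C * (1 + Real.log 18) < lam) {S : Set α} (hS : MeasurableSet S) (hS_fin : μ S < ∞)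
    (hint : IntegrableOn f S μ) (hlt : ∀ x ∈ S, lam < f x) :
    μ S ≤ ENNReal.ofReal (Real.exp (1 - lam / C)) * a := by
  rcases eq_or_ne (μ S) 0 with hS0 | hS0
  · simp [hS0]
  have h_log := h.le_mul_log hS hS_fin hS0 (h.nine_mul_le hμ ha0 ha hlam hS hS_fin hint hlt)
    hint hlt
  have h_real := le_exp_mul_of_le_mul_log hC (ENNReal.toReal_pos hS0 hS_fin.ne)
    (ENNReal.toReal_pos ha0 ha) h_log
  calc μ S = ENNReal.ofReal (μ S).toReal := (ENNReal.ofReal_toReal hS_fin.ne).symm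
    _ ≤ ENNReal.ofReal (Real.exp (1 - lam / C) * a.toReal) := ENNReal.ofReal_le_ofReal h_real
    _ = ENNReal.ofReal (Real.exp (1 - lam / C)) * a := by
      rw [ENNReal.ofReal_mul (Real.exp_pos _).le, ENNReal.ofReal_toReal ha]

theorem HasLogDualBound.measure_lt_le_exp_mul (h : HasLogDualBound μ f a C)
    (hμ : HasDarbouxProperty μ) (hf : Measurable f) (hC : 0 < C) (ha0 : a ≠ 0) (ha : a ≠ ∞)
    (hlam : C * (1 + Real.log 18) < lam) (h_fin : μ {x | lam < f x} < ∞) :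
    μ {x | lam < f x} ≤ ENNReal.ofReal (Real.exp (1 - lam / C)) * a := by
  -- `f` is integrable on these pieces, so the set integrals in `HasLogDualBound` are not junk.
  set S : ℕ → Set α := fun n => {x | lam < f x ∧ |f x| ≤ n}
  have hS_mono : Monotone S := fun m n hmn x hx => ⟨hx.1, hx.2.trans (Nat.cast_le.2 hmn)⟩
  have h_union : {x | lam < f x} = ⋃ n, S n := by
    ext x
    simpa [S] using fun _ => ⟨⌈|f x|⌉₊, Nat.le_ceil _⟩
  rw [h_union, hS_mono.measure_iUnion]
  refine iSup_le fun n => ?_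
  have hS_meas : MeasurableSet (S n) :=
    (measurableSet_lt measurable_const hf).inter (measurableSet_le hf.abs measurable_const)
  have hS_fin : μ (S n) < ∞ := (measure_mono fun x hx => hx.1).trans_lt h_fin
  have hint : IntegrableOn f (S n) μ :=
    .of_bound hS_fin hf.aestronglyMeasurable n
      ((ae_restrict_iff' hS_meas).2 (.of_forall fun x hx => hx.2))
  exact h.measure_le_exp_mul hμ hC ha0 ha hlam hS_meas hS_fin hint fun x hx => hx.1

theorem HasLogDualBound.measure_abs_lt_le (h : HasLogDualBound μ f a C)
    (hμ : HasDarbouxProperty μ) (hf : Measurable f) (hC : 0 < C) (ha0 : a ≠ 0) (ha : a ≠ ∞)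
    (hlam : C * (1 + Real.log 18) < lam) (h_fin : μ {x | lam < |f x|} < ∞) :
    μ {x | lam < |f x|} ≤ ENNReal.ofReal (2 * Real.exp (1 - lam / C)) * a := by
  have h_sub : {x | lam < |f x|} = {x | lam < f x} ∪ {x | lam < (-f) x} := by
    ext x
    simp [lt_abs]
  rw [h_sub] at h_fin ⊢
  have h_pos := h.measure_lt_le_exp_mul hμ hf hC ha0 ha hlam
    ((measure_mono subset_union_left).trans_lt h_fin)
  have h_neg := h.neg.measure_lt_le_exp_mul hμ hf.neg hC ha0 ha hlam
    ((measure_mono subset_union_right).trans_lt h_fin)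
  calc _ ≤ _ := measure_union_le _ _
    _ ≤ _ := add_le_add h_pos h_neg
    _ = ENNReal.ofReal (2 * Real.exp (1 - lam / C)) * a := by
      rw [ENNReal.ofReal_mul zero_le_two, ENNReal.ofReal_ofNat, two_mul, add_mul]

end LogDualBound

/-- Restricted type implies strong type above the critical exponent: if `T` (acting on
indicators of sets) satisfies the bilinear logarithmic bound
`|⟨T 1_E, 1_F⟩| ≤ C |F| (1 + log(|E|/|F|))` whenever `|E| ≥ 9 |F|`, and `T` maps `L²`
into weak `L²` with norm `C`, then for every `p > 2`,
`|{|T 1_E| > λ}| ≤ C_p λ^{-p} |E|` for all `λ > 1`. -/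
theorem restricted_type_implies_strong_type
    (T : Set (ℝ × ℝ) → (ℝ × ℝ) → ℝ) (C : ℝ) (hC : 0 < C)
    (hmeas : ∀ E : Set (ℝ × ℝ), MeasurableSet E → Measurable (T E))
    (hbilin : ∀ E F : Set (ℝ × ℝ), MeasurableSet E → MeasurableSet F →
      volume E < ⊤ → volume F < ⊤ → 9 * volume F ≤ volume E →
      |∫ x in F, T E x| ≤
        C * (volume F).toReal *
          (1 + Real.log ((volume E).toReal / (volume F).toReal)))
    (hweak : ∀ E : Set (ℝ × ℝ), MeasurableSet E → volume E < ⊤ → ∀ lam : ℝ, 0 < lam →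
      volume {x | lam < |T E x|} ≤ ENNReal.ofReal (C ^ 2 * (volume E).toReal / lam ^ 2)) :
    ∀ p : ℝ, 2 < p → ∃ Cp : ℝ, 0 < Cp ∧
      ∀ E : Set (ℝ × ℝ), MeasurableSet E → volume E < ⊤ → ∀ lam : ℝ, 1 < lam →
        volume {x | lam < |T E x|} ≤ ENNReal.ofReal (Cp * lam ^ (-p)) * volume E := by
  intro p hp
  set lam₀ := C * (1 + Real.log 18)
  set K := Real.exp 1 * ⌈p⌉₊ ! * C ^ ⌈p⌉₊
  refine ⟨C ^ 2 * lam₀ ^ p + 2 * K, by positivity, fun E hE hE_fin lam hlam => ?_⟩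
  have hlam0 : 0 < lam := one_pos.trans hlam
  have h_weak : volume {x | lam < |T E x|} ≤ ENNReal.ofReal (C ^ 2 / lam ^ 2) * volume E := by
    have := hweak E hE hE_fin lam hlam0
    rwa [mul_div_right_comm, ENNReal.ofReal_mul (by positivity),
      ENNReal.ofReal_toReal hE_fin.ne] at this
  rcases le_or_gt lam lam₀ with h_small | h_large
  · refine h_weak.trans ?_
    gcongr ENNReal.ofReal ?_ * _
    refine (div_sq_le_mul_rpow_neg C hlam.le h_small (by linarith : (0 : ℝ) ≤ p)).trans ?_
    gcongr
    exact le_add_of_nonneg_right (by positivity)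
  rcases eq_or_ne (volume E) 0 with hE0 | hE0
  · simpa [hE0] using h_weak
  have h_log : HasLogDualBound volume (T E) (volume E) C :=
    fun F hF hF_fin h9 => hbilin E F hE hF hE_fin hF_fin h9
  have h_fin := h_weak.trans_lt (ENNReal.mul_lt_top ENNReal.ofReal_lt_top hE_fin)
  refine (h_log.measure_abs_lt_le hasDarbouxProperty_volume_prod (hmeas E hE) hC hE0 hE_fin.ne
    h_large h_fin).trans ?_
  gcongr ENNReal.ofReal ?_ * _
  calc 2 * Real.exp (1 - lam / C) ≤ 2 * (K * lam ^ (-p)) := by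
        gcongr; exact exp_one_sub_div_le_mul_rpow_neg hC hlam.le p
    _ ≤ _ := by rw [← mul_assoc]; gcongr; exact le_add_of_nonneg_left (by positivity)
end
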